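/- arXiv:2009.05633 — 7 statements merged into one kernel-verified Lean document; each statement's English description precedes it below -/
import Mathlib

section
/- Assume 0 < m < 1 and 1 < r < 2/m. Then the envelope velocity s_env attains its minimum on (0,1) at a unique point γ_lin ∈ (0,1), i.e. s_env(γ_lin) < s_env(γ) for all γ ∈ (0,1) with γ ≠ γ_lin. Moreover s_lin := s_env(γ_lin) < 1, and for every s with s_lin < s < 1 the equation s_env(γ) = s has exactly two solutions γ in (0,1), and these satisfy 0 < γ_s < γ_lin < γ_w < 1. -/
/-!
With `P γ = a + b γ + a γ²`, the derivative of `s_env` is `-crit γ / (γ log² γ)` where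
`crit γ = γ P'(γ) / P(γ) · log γ - log P(γ)`. The derivative of `crit` is a positive multiple of
`log γ`, so `crit` decreases strictly on `[0, 1]`, from `-log a > 0` to `-log (2a + b) < 0`
(here `a = rm/2 < 1` and `2a + b = r > 1`); its unique zero is `γ_lin`, where `s_env` turns from
decreasing to increasing. At `γ_lin` we get `log P / log γ = γ P' / P > 0`, hence `s_lin < 1`.
Finally `s_env → 1` as `γ → 0` and `s_env → ∞` as `γ → 1`, so each level in `(s_lin, 1)` is
taken exactly once on each side of `γ_lin`.
-/

/-- The envelope velocity `s_env(γ) = 1 - log(a + b γ + a γ²) / log γ`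
with `a = r m / 2` and `b = r (1 - m)`. -/
noncomputable def sEnv (r m γ : ℝ) : ℝ :=
  1 - Real.log (r * m / 2 + r * (1 - m) * γ + r * m / 2 * γ ^ 2) / Real.log γ

open Real Set Filter Topology

section Valley

variable {f : ℝ → ℝ} {l c u : ℝ}

theorem lt_of_strictAntiOn_of_strictMonoOn (hanti : StrictAntiOn f (Ioc l c))
    (hmono : StrictMonoOn f (Ico c u)) (hc : c ∈ Ioo l u) {x : ℝ} (hx : x ∈ Ioo l u)
    (hxc : x ≠ c) : f c < f x := by
  rcases hxc.lt_or_gt with h | h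
  · exact hanti ⟨hx.1, h.le⟩ ⟨hc.1, le_rfl⟩ h
  · exact hmono ⟨le_rfl, hc.2⟩ ⟨h.le, hx.2⟩ h

theorem exists_pair_eq_of_strictAntiOn_of_strictMonoOn (hanti : StrictAntiOn f (Ioc l c))
    (hmono : StrictMonoOn f (Ico c u)) (hcont : ContinuousOn f (Ioo l u))
    {x₀ x₁ s : ℝ} (hx₀ : x₀ ∈ Ioo l c) (hx₁ : x₁ ∈ Ioo c u)
    (hs : f c < s) (hs₀ : s < f x₀) (hs₁ : s < f x₁) :
    ∃ xs xw, xs ∈ Ioo l c ∧ xw ∈ Ioo c u ∧ f xs = s ∧ f xw = s ∧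
      ∀ x ∈ Ioo l u, f x = s → x = xs ∨ x = xw := by
  obtain ⟨xs, hxs, hfxs⟩ := intermediate_value_Ioo' hx₀.2.le
    (hcont.mono (Icc_subset_Ioo hx₀.1 (hx₁.1.trans hx₁.2))) ⟨hs, hs₀⟩
  obtain ⟨xw, hxw, hfxw⟩ := intermediate_value_Ioo hx₁.1.le
    (hcont.mono (Icc_subset_Ioo (hx₀.1.trans hx₀.2) hx₁.2)) ⟨hs, hs₁⟩
  have hxs' : xs ∈ Ioo l c := ⟨hx₀.1.trans hxs.1, hxs.2⟩
  have hxw' : xw ∈ Ioo c u := ⟨hxw.1, hxw.2.trans hx₁.2⟩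
  refine ⟨xs, xw, hxs', hxw', hfxs, hfxw, fun x hx hfx => ?_⟩
  rcases lt_trichotomy x c with h | rfl | h
  · exact .inl <| hanti.injOn ⟨hx.1, h.le⟩ ⟨hxs'.1, hxs'.2.le⟩ (hfx.trans hfxs.symm)
  · exact absurd hfx hs.ne
  · exact .inr <| hmono.injOn ⟨h.le, hx.2⟩ ⟨hxw'.1.le, hxw'.2⟩ (hfx.trans hfxw.symm)

end Valley

namespace EnvelopeVelocity

def poly (a b γ : ℝ) : ℝ := a + b * γ + a * γ ^ 2

noncomputable def speed (a b γ : ℝ) : ℝ := 1 - log (poly a b γ) / log γ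

/-- `speed' γ = -crit γ / (γ log² γ)`; the factor `γ * log γ` makes `crit` continuous at `0`. -/
noncomputable def crit (a b γ : ℝ) : ℝ :=
  (b + 2 * a * γ) / poly a b γ * (γ * log γ) - log (poly a b γ)

theorem sEnv_eq_speed (r m : ℝ) : sEnv r m = speed (r * m / 2) (r * (1 - m)) := rfl

variable {a b : ℝ}

theorem poly_pos (ha : 0 < a) (hb : 0 ≤ b) {γ : ℝ} (hγ : 0 ≤ γ) : 0 < poly a b γ := by
  unfold poly; positivity

theorem continuous_poly : Continuous (poly a b) := by
  unfold poly; fun_prop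

theorem hasDerivAt_poly (γ : ℝ) : HasDerivAt (poly a b) (b + 2 * a * γ) γ := by
  have : HasDerivAt (fun x => a + b * x + a * x ^ 2) (b * 1 + a * (2 * γ ^ 1)) γ :=
    (((hasDerivAt_id γ).const_mul b).const_add a).add ((hasDerivAt_pow 2 γ).const_mul a)
  exact this.congr_deriv (by ring)

theorem hasDerivAt_speed {γ : ℝ} (hP : poly a b γ ≠ 0) (hlog : log γ ≠ 0) :
    HasDerivAt (speed a b) (-crit a b γ / (γ * log γ ^ 2)) γ := by
  have hγ : γ ≠ 0 := by rintro rfl; simp at hlog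
  refine (((hasDerivAt_poly γ).log hP).div (hasDerivAt_log hγ) hlog).const_sub 1 |>.congr_deriv ?_
  unfold crit
  field_simp

theorem hasDerivAt_crit {γ : ℝ} (hγ : γ ≠ 0) (hP : poly a b γ ≠ 0) :
    HasDerivAt (crit a b)
      ((a * b + 4 * a ^ 2 * γ + a * b * γ ^ 2) / poly a b γ ^ 2 * log γ) γ := by
  have hR : HasDerivAt (fun x => b + 2 * a * x) (2 * a) γ := by
    simpa using ((hasDerivAt_id γ).const_mul (2 * a)).const_add b
  refine ((hR.div (hasDerivAt_poly γ) hP).mul (hasDerivAt_mul_log hγ)).sub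
    ((hasDerivAt_poly γ).log hP) |>.congr_deriv ?_
  simp only [Pi.div_apply]
  unfold poly at hP ⊢
  field_simp
  ring

theorem continuousOn_crit (ha : 0 < a) (hb : 0 ≤ b) : ContinuousOn (crit a b) (Ici 0) := by
  have hP : ∀ γ ∈ Ici (0 : ℝ), poly a b γ ≠ 0 := fun γ hγ => (poly_pos ha hb hγ).ne'
  unfold crit
  exact (((by fun_prop : Continuous fun γ => b + 2 * a * γ).continuousOn.div
    continuous_poly.continuousOn hP).mul continuous_mul_log.continuousOn).sub
    (continuous_poly.continuousOn.log hP)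

theorem crit_strictAntiOn (ha : 0 < a) (hb : 0 ≤ b) : StrictAntiOn (crit a b) (Icc 0 1) := by
  refine strictAntiOn_of_deriv_neg (convex_Icc 0 1)
    ((continuousOn_crit ha hb).mono Icc_subset_Ici_self) fun γ hγ => ?_
  rw [interior_Icc] at hγ
  have hP := poly_pos ha hb hγ.1.le
  rw [(hasDerivAt_crit hγ.1.ne' hP.ne').deriv]
  refine mul_neg_of_pos_of_neg (div_pos ?_ (by positivity)) (log_neg hγ.1 hγ.2)
  have hγ0 := hγ.1
  positivity

theorem exists_crit_eq_zero (ha : 0 < a) (hb : 0 ≤ b) (ha1 : a < 1) (hab : 1 < 2 * a + b) :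
    ∃ c ∈ Ioo (0 : ℝ) 1, crit a b c = 0 := by
  have h0 : crit a b 0 = -log a := by simp [crit, poly]
  have h1 : crit a b 1 = -log (2 * a + b) := by norm_num [crit, poly]; ring_nf
  exact intermediate_value_Ioo' zero_le_one ((continuousOn_crit ha hb).mono Icc_subset_Ici_self)
    ⟨by rw [h1]; linarith [log_pos hab], by rw [h0]; linarith [log_neg ha ha1]⟩

theorem speed_lt_one_of_crit_eq_zero (ha : 0 < a) (hb : 0 ≤ b) {c : ℝ} (hc : c ∈ Ioo 0 1)
    (hcrit : crit a b c = 0) : speed a b c < 1 := by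
  have hlog := (log_neg hc.1 hc.2).ne
  have hP := poly_pos ha hb hc.1.le
  have hquot : log (poly a b c) / log c = (b + 2 * a * c) / poly a b c * c := by
    rw [crit, sub_eq_zero] at hcrit
    rw [← hcrit]
    field_simp
  have hc0 := hc.1
  have : 0 < (b + 2 * a * c) / poly a b c * c := by positivity
  rw [speed, hquot]
  linarith

theorem continuousOn_speed (ha : 0 < a) (hb : 0 ≤ b) : ContinuousOn (speed a b) (Ioo 0 1) :=
  fun _ hγ => (hasDerivAt_speed (poly_pos ha hb hγ.1.le).ne'
    (log_neg hγ.1 hγ.2).ne).continuousAt.continuousWithinAt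

theorem speed_strictAntiOn (ha : 0 < a) (hb : 0 ≤ b) {c : ℝ} (hc : c ∈ Ioo 0 1)
    (hcrit : crit a b c = 0) : StrictAntiOn (speed a b) (Ioc 0 c) := by
  refine strictAntiOn_of_deriv_neg (convex_Ioc 0 c)
    ((continuousOn_speed ha hb).mono (Ioc_subset_Ioo_right hc.2)) fun γ hγ => ?_
  rw [interior_Ioc] at hγ
  have hlog := (log_neg hγ.1 (hγ.2.trans hc.2)).ne
  rw [(hasDerivAt_speed (poly_pos ha hb hγ.1.le).ne' hlog).deriv]
  have hpos : 0 < crit a b γ :=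
    hcrit ▸ crit_strictAntiOn ha hb ⟨hγ.1.le, (hγ.2.trans hc.2).le⟩ ⟨hc.1.le, hc.2.le⟩ hγ.2
  have hγ0 := hγ.1
  exact div_neg_of_neg_of_pos (neg_neg_of_pos hpos) (by positivity)

theorem speed_strictMonoOn (ha : 0 < a) (hb : 0 ≤ b) {c : ℝ} (hc : c ∈ Ioo 0 1)
    (hcrit : crit a b c = 0) : StrictMonoOn (speed a b) (Ico c 1) := by
  refine strictMonoOn_of_deriv_pos (convex_Ico c 1)
    ((continuousOn_speed ha hb).mono (Ico_subset_Ioo_left hc.1)) fun γ hγ => ?_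
  rw [interior_Ico] at hγ
  have hγ0 := hc.1.trans hγ.1
  have hlog := (log_neg hγ0 hγ.2).ne
  rw [(hasDerivAt_speed (poly_pos ha hb hγ0.le).ne' hlog).deriv]
  have hneg : crit a b γ < 0 :=
    hcrit ▸ crit_strictAntiOn ha hb ⟨hc.1.le, hc.2.le⟩ ⟨hγ0.le, hγ.2.le⟩ hγ.1
  exact div_pos (neg_pos_of_neg hneg) (by positivity)

theorem continuousAt_log_poly {γ : ℝ} (hP : poly a b γ ≠ 0) :
    ContinuousAt (fun x => log (poly a b x)) γ :=
  continuous_poly.continuousAt.log hP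

theorem tendsto_speed_nhdsGT_zero (ha : 0 < a) : Tendsto (speed a b) (𝓝[>] 0) (𝓝 1) := by
  have hP0 : poly a b 0 = a := by simp [poly]
  have hP := (continuousAt_log_poly (hP0 ▸ ha.ne')).tendsto.mono_left
    (nhdsWithin_le_nhds (s := Ioi 0))
  show Tendsto (fun γ => 1 - log (poly a b γ) / log γ) _ _
  simpa [div_eq_mul_inv] using (hP.mul tendsto_log_nhdsGT_zero.inv_tendsto_atBot).const_sub 1

theorem tendsto_speed_nhdsLT_one (hab : 1 < 2 * a + b) :
    Tendsto (speed a b) (𝓝[<] 1) atTop := by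
  have hP1 : poly a b 1 = 2 * a + b := by rw [poly]; ring
  have hP := (continuousAt_log_poly (hP1 ▸ (zero_lt_one.trans hab).ne')).tendsto.mono_left
    (nhdsWithin_le_nhds (s := Iio 1))
  have hlog : Tendsto log (𝓝[<] 1) (𝓝[<] 0) := by
    refine tendsto_nhdsWithin_iff.2 ⟨?_, ?_⟩
    · simpa using (continuousAt_log one_ne_zero).tendsto.mono_left nhdsWithin_le_nhds
    · filter_upwards [Ioo_mem_nhdsLT zero_lt_one] with γ hγ using log_neg hγ.1 hγ.2
  have := hP.pos_mul_atBot (hP1 ▸ log_pos hab) hlog.inv_tendsto_nhdsLT_zero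
  show Tendsto (fun γ => 1 - log (poly a b γ) / log γ) _ _
  simpa [div_eq_mul_inv, sub_eq_add_neg] using
    tendsto_atTop_add_const_left _ 1 (tendsto_neg_atBot_atTop.comp this)

end EnvelopeVelocity

open EnvelopeVelocity in
theorem stmt_0 (r m : ℝ) (hm0 : 0 < m) (hm1 : m < 1) (hr1 : 1 < r) (hr2 : r < 2 / m) :
    ∃ γlin ∈ Set.Ioo (0 : ℝ) 1,
      (∀ γ ∈ Set.Ioo (0 : ℝ) 1, γ ≠ γlin → sEnv r m γlin < sEnv r m γ) ∧
      sEnv r m γlin < 1 ∧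
      ∀ s : ℝ, sEnv r m γlin < s → s < 1 →
        ∃ γs γw : ℝ, 0 < γs ∧ γs < γlin ∧ γlin < γw ∧ γw < 1 ∧
          sEnv r m γs = s ∧ sEnv r m γw = s ∧
          ∀ γ ∈ Set.Ioo (0 : ℝ) 1, sEnv r m γ = s → γ = γs ∨ γ = γw := by
  rw [sEnv_eq_speed]
  have ha : 0 < r * m / 2 := by positivity
  have hb : 0 ≤ r * (1 - m) := by nlinarith
  have ha1 : r * m / 2 < 1 := by rw [lt_div_iff₀ hm0] at hr2; linarith
  have hab : 1 < 2 * (r * m / 2) + r * (1 - m) := by linarith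
  obtain ⟨c, hc, hcrit⟩ := exists_crit_eq_zero ha hb ha1 hab
  have hanti := speed_strictAntiOn ha hb hc hcrit
  have hmono := speed_strictMonoOn ha hb hc hcrit
  refine ⟨c, hc, fun γ hγ hne => lt_of_strictAntiOn_of_strictMonoOn hanti hmono hc hγ hne,
    speed_lt_one_of_crit_eq_zero ha hb hc hcrit, fun s hs hs1 => ?_⟩
  obtain ⟨x₀, hx₀s, hx₀⟩ := (((tendsto_speed_nhdsGT_zero ha).eventually (lt_mem_nhds hs1)).and
    (Ioo_mem_nhdsGT hc.1)).exists
  obtain ⟨x₁, hx₁s, hx₁⟩ := (((tendsto_speed_nhdsLT_one hab).eventually_gt_atTop s).and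
    (Ioo_mem_nhdsLT hc.2)).exists
  obtain ⟨γs, γw, hγs, hγw, hs, hw, huniq⟩ := exists_pair_eq_of_strictAntiOn_of_strictMonoOn
    hanti hmono (continuousOn_speed ha hb) hx₀ hx₁ hs hx₀s hx₁s
  exact ⟨γs, γw, hγs.1, hγs.2, hγw.1, hγw.2, hs, hw, huniq⟩
end

section
/- Let r > 1 and let 0 < m₁ < m₂ < 1 with r*m₂ < 2. For j = 1, 2 the minimum s_lin(m_j) = min over γ ∈ (0,1) of s_env(γ; m_j) exists, and s_lin(m₁) < s_lin(m₂); that is, the linear spreading speed is strictly increasing as a function of the migration rate m. -/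
/-!
Writing `a + bγ + aγ² = r (γ + (m/2)(1 - γ)²)` shows that this quadratic increases strictly
with `m` for every `γ ≠ 1`; since `log γ < 0` on `(0, 1)`, `s_env(γ; m)` then increases strictly
with `m` at every `γ`, and so do the minima. The minimum exists because `s_env(·; m)` is continuous
on `(0, 1)`, tends to `1` as `γ → 0⁺` and to `+∞` as `γ → 1⁻` (the quadratic tends to `r > 1`),
while at `γ = (2 - r m) / (4 r)` the quadratic is below `1`, so that `s_env < 1` there.
-/

open Real Filter Set Topology

theorem ContinuousOn.exists_isMinOn_Ioo {α β : Type*} [LinearOrder α] [TopologicalSpace α]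
    [ClosedIicTopology α] [LinearOrder β] [TopologicalSpace β] [OrderTopology β]
    [CompactIccSpace β] {f : β → α} {a b c : β} (hf : ContinuousOn f (Ioo a b))
    (hc : c ∈ Ioo a b) (ha : ∀ᶠ x in 𝓝[>] a, f c ≤ f x) (hb : ∀ᶠ x in 𝓝[<] b, f c ≤ f x) :
    ∃ x ∈ Ioo a b, IsMinOn f (Ioo a b) x := by
  obtain ⟨u, hau, hu⟩ := (mem_nhdsGT_iff_exists_Ioo_subset' hc.1).1 ha
  obtain ⟨l, hlb, hl⟩ := (mem_nhdsLT_iff_exists_Ioo_subset' hc.2).1 hb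
  have hcK : c ∈ Icc (min u c) (max l c) := ⟨min_le_right _ _, le_max_right _ _⟩
  have hK : Icc (min u c) (max l c) ⊆ Ioo a b :=
    Icc_subset_Ioo (lt_min hau hc.1) (max_lt hlb hc.2)
  obtain ⟨x, hxK, hmin⟩ := isCompact_Icc.exists_isMinOn ⟨c, hcK⟩ (hf.mono hK)
  refine ⟨x, hK hxK, fun y hy => ?_⟩
  rcases lt_or_ge y (min u c) with hyu | hyu
  · exact (hmin hcK).trans (hu ⟨hy.1, hyu.trans_le (min_le_left _ _)⟩)
  rcases lt_or_ge (max l c) y with hyl | hyl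
  · exact (hmin hcK).trans (hl ⟨(le_max_left _ _).trans_lt hyl, hy.2⟩)
  exact hmin ⟨hyu, hyl⟩

noncomputable def envQuad (r m γ : ℝ) : ℝ := r * m / 2 + r * (1 - m) * γ + r * m / 2 * γ ^ 2

section

variable {r m γ : ℝ}

theorem sEnv_eq_envQuad (r m : ℝ) : sEnv r m = fun γ => 1 - log (envQuad r m γ) / log γ := rfl

theorem envQuad_eq (r m γ : ℝ) : envQuad r m γ = r * (γ + m / 2 * (1 - γ) ^ 2) := by
  unfold envQuad; ring

theorem envQuad_zero (r m : ℝ) : envQuad r m 0 = r * m / 2 := by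
  unfold envQuad; ring

theorem envQuad_one (r m : ℝ) : envQuad r m 1 = r := by
  unfold envQuad; ring

theorem continuous_envQuad (r m : ℝ) : Continuous (envQuad r m) := by
  unfold envQuad; fun_prop

theorem envQuad_pos (hr : 0 < r) (hm : 0 ≤ m) (hγ : 0 < γ) : 0 < envQuad r m γ := by
  rw [envQuad_eq]; positivity

theorem strictMono_envQuad (hr : 0 < r) (hγ : γ ≠ 1) : StrictMono (envQuad r · γ) := by
  intro m₁ m₂ hm
  have : 0 < (1 - γ) ^ 2 := by have := sub_ne_zero.2 hγ.symm; positivity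
  simp only [envQuad_eq]
  gcongr

theorem strictMonoOn_sEnv (hr : 0 < r) (hγ : γ ∈ Ioo (0 : ℝ) 1) :
    StrictMonoOn (sEnv r · γ) (Ici 0) := by
  intro m₁ hm₁ m₂ _ hm
  have hlog : log (envQuad r m₁ γ) < log (envQuad r m₂ γ) :=
    log_lt_log (envQuad_pos hr hm₁ hγ.1) (strictMono_envQuad hr hγ.2.ne hm)
  simp only [sEnv_eq_envQuad]
  linarith [div_lt_div_of_neg_of_lt (log_neg hγ.1 hγ.2) hlog]

theorem continuousOn_sEnv (hr : 0 < r) (hm : 0 ≤ m) : ContinuousOn (sEnv r m) (Ioo 0 1) := by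
  have hquad : ContinuousOn (fun γ => log (envQuad r m γ)) (Ioo 0 1) :=
    (continuous_envQuad r m).continuousOn.log fun γ hγ => (envQuad_pos hr hm hγ.1).ne'
  exact continuousOn_const.sub <| hquad.div (continuousOn_id.log fun γ hγ => hγ.1.ne')
    fun γ hγ => (log_neg hγ.1 hγ.2).ne

theorem tendsto_sEnv_nhdsGT_zero (hr : 0 < r) (hm : 0 < m) :
    Tendsto (sEnv r m) (𝓝[>] 0) (𝓝 1) := by
  have hcont := (continuous_envQuad r m).continuousAt.log
    (a := 0) (by rw [envQuad_zero]; positivity)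
  have hquad := hcont.tendsto.mono_left (nhdsWithin_le_nhds (s := Ioi 0))
  rw [sEnv_eq_envQuad]
  simpa using tendsto_const_nhds.sub (hquad.div_atBot tendsto_log_nhdsGT_zero)

theorem tendsto_log_nhdsLT_one : Tendsto log (𝓝[<] 1) (𝓝[<] 0) := by
  have := (continuousAt_log one_ne_zero).continuousWithinAt.tendsto_nhdsWithin
    (s := Ioo 0 1) (t := Iio 0) fun γ hγ => log_neg hγ.1 hγ.2
  rwa [log_one, nhdsWithin_Ioo_eq_nhdsLT zero_lt_one] at this

theorem tendsto_sEnv_nhdsLT_one (hr : 1 < r) :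
    Tendsto (sEnv r m) (𝓝[<] 1) atTop := by
  have hquad : Tendsto (fun γ => log (envQuad r m γ)) (𝓝[<] 1) (𝓝 (log r)) := by
    have hcont := (continuous_envQuad r m).continuousAt.log
      (a := 1) (by rw [envQuad_one]; positivity)
    simpa only [envQuad_one] using hcont.tendsto.mono_left nhdsWithin_le_nhds
  have hdiv := hquad.pos_mul_atBot (log_pos hr) tendsto_log_nhdsLT_one.inv_tendsto_nhdsLT_zero
  refine (tendsto_atTop_add_const_left _ 1 (tendsto_neg_atBot_atTop.comp hdiv)).congr fun γ => ?_
  simp [sEnv_eq_envQuad, div_eq_mul_inv, sub_eq_add_neg]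

theorem exists_sEnv_lt_one (hr : 1 < r) (hm : 0 < m) (hrm : r * m < 2) :
    ∃ γ ∈ Ioo (0 : ℝ) 1, sEnv r m γ < 1 := by
  have hr₀ : 0 < r := by linarith
  -- at this `γ` the quadratic is at most `r γ + r m / 2 = 1 / 2 + r m / 4 < 1`
  set γ := (2 - r * m) / (4 * r) with hγ_def
  have hrγ : r * γ = (2 - r * m) / 4 := by rw [hγ_def]; field_simp
  have hγ₀ : 0 < γ := by positivity
  have hγ₁ : γ < 1 := by rw [div_lt_one (by positivity)]; nlinarith
  have hquad : envQuad r m γ < 1 := by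
    have : (1 - γ) ^ 2 < 1 := by nlinarith
    rw [envQuad_eq]; nlinarith [mul_pos hr₀ hm]
  refine ⟨γ, ⟨hγ₀, hγ₁⟩, ?_⟩
  have := div_pos_of_neg_of_neg (log_neg (envQuad_pos hr₀ hm.le hγ₀) hquad) (log_neg hγ₀ hγ₁)
  simp only [sEnv_eq_envQuad]
  linarith

theorem exists_isLeast_sEnv (hr : 1 < r) (hm : 0 < m) (hrm : r * m < 2) :
    ∃ s, IsLeast (sEnv r m '' Ioo 0 1) s := by
  have hr₀ : 0 < r := by linarith
  obtain ⟨γ, hγ, hlt⟩ := exists_sEnv_lt_one hr hm hrm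
  obtain ⟨x, hx, hmin⟩ := (continuousOn_sEnv hr₀ hm.le).exists_isMinOn_Ioo hγ
    ((tendsto_sEnv_nhdsGT_zero hr₀ hm).eventually (eventually_ge_nhds hlt))
    ((tendsto_sEnv_nhdsLT_one hr).eventually (eventually_ge_atTop _))
  exact ⟨_, mem_image_of_mem _ hx, forall_mem_image.2 hmin⟩

end

theorem stmt_4_general (r m₁ m₂ : ℝ) (hr : 1 < r) (hm₁ : 0 < m₁) (hm₁₂ : m₁ < m₂)
    (hrm₂ : r * m₂ < 2) :
    ∃ s₁ s₂ : ℝ,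
      IsLeast ((fun γ => sEnv r m₁ γ) '' Set.Ioo (0 : ℝ) 1) s₁ ∧
      IsLeast ((fun γ => sEnv r m₂ γ) '' Set.Ioo (0 : ℝ) 1) s₂ ∧
      s₁ < s₂ := by
  have hrm₁ : r * m₁ < 2 := by nlinarith
  obtain ⟨s₁, hs₁⟩ := exists_isLeast_sEnv hr hm₁ hrm₁
  obtain ⟨s₂, hs₂⟩ := exists_isLeast_sEnv hr (hm₁.trans hm₁₂) hrm₂
  refine ⟨s₁, s₂, hs₁, hs₂, ?_⟩
  obtain ⟨γ, hγ, rfl⟩ := hs₂.1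
  calc s₁ ≤ sEnv r m₁ γ := hs₁.2 (mem_image_of_mem _ hγ)
    _ < sEnv r m₂ γ := strictMonoOn_sEnv (by linarith) hγ hm₁.le (hm₁.trans hm₁₂).le hm₁₂

theorem stmt_4 (r m₁ m₂ : ℝ) (hr : 1 < r) (hm₁ : 0 < m₁) (hm₁₂ : m₁ < m₂) (hm₂ : m₂ < 1)
    (hrm₂ : r * m₂ < 2) :
    ∃ s₁ s₂ : ℝ,
      IsLeast ((fun γ => sEnv r m₁ γ) '' Set.Ioo (0 : ℝ) 1) s₁ ∧
      IsLeast ((fun γ => sEnv r m₂ γ) '' Set.Ioo (0 : ℝ) 1) s₂ ∧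
      s₁ < s₂ :=
  stmt_4_general r m₁ m₂ hr hm₁ hm₁₂ hrm₂
end

section
/- Let r > 0 and γ ∈ (0,1) be fixed. Then the function m ↦ 1 - log(r*m/2 + r*(1-m)*γ + (r*m/2)*γ^2)/log(γ) is strictly increasing on the interval (0,1). -/
/-! The argument of the logarithm equals `r * (γ + (1 - γ) ^ 2 / 2 * m)`, a positive affine function
of `m` with positive slope. Composing with `log` keeps it strictly increasing, and dividing by
`log γ < 0` and subtracting from `1` reverses the order twice. -/

open Real

lemma StrictMonoOn.one_sub_log_div_of_neg {f : ℝ → ℝ} {s : Set ℝ} {c : ℝ} (hc : c < 0)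
    (hpos : ∀ x ∈ s, 0 < f x) (hf : StrictMonoOn f s) :
    StrictMonoOn (fun x => 1 - log (f x) / c) s := by
  intro x hx y hy hxy
  have hlog : log (f x) < log (f y) := log_lt_log (hpos x hx) (hf hx hy hxy)
  have hdiv : log (f y) / c < log (f x) / c := div_lt_div_of_neg_of_lt hc hlog
  simp only
  linarith

lemma envelope_arg_eq (r γ m : ℝ) :
    r * m / 2 + r * (1 - m) * γ + r * m / 2 * γ ^ 2 = r * (γ + (1 - γ) ^ 2 / 2 * m) := by
  ring

theorem stmt_5 (r γ : ℝ) (hr : 0 < r) (hγ : γ ∈ Set.Ioo (0 : ℝ) 1) :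
    StrictMonoOn
      (fun m : ℝ =>
        1 - Real.log (r * m / 2 + r * (1 - m) * γ + r * m / 2 * γ ^ 2) / Real.log γ)
      (Set.Ioo (0 : ℝ) 1) := by
  obtain ⟨hγ0, hγ1⟩ := hγ
  simp only [envelope_arg_eq]
  have hslope : 0 < (1 - γ) ^ 2 / 2 := by have := sub_pos.2 hγ1; positivity
  refine StrictMonoOn.one_sub_log_div_of_neg (log_neg hγ0 hγ1) ?_ ?_
  · intro m hm
    have := hm.1
    positivity
  · intro x _ y _ hxy
    dsimp only
    gcongr
end

section
/- The complex polynomial X^{q-p} - (a + b*X + a*X^2)^q has exactly q - p roots, counted with multiplicity, in the closed disk {z ∈ ℂ : |z| ≤ γ_s}. -/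
/-!
Write `Q(z) = a + b z + a z²` and `n = q - p`. The function `t ↦ q log Q(eᵗ) - n t` is strictly
convex and vanishes at `log γ_s` and `log γ_w`, so `Q(γ)^q < γⁿ` for `γ_s < γ < γ_w`. As `Q` has
nonnegative coefficients, `|Q(z)| ≤ Q(|z|)`, hence `|Q(z)^q| < |zⁿ|` on the annulus
`γ_s < |z| < γ_w`. So the polynomial has no roots there, and by Rouché's theorem on a circle
`|z| = ρ` inside the annulus it has as many roots in `|z| < ρ` as `zⁿ`, namely `n`.
Rouché's theorem for polynomials follows from the argument principle, since `log (1 + h / f)` is a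
primitive of `(f + h)' / (f + h) - f' / f` on a circle where `|h| < |f|`.
-/

open Set Polynomial Metric

section Rouche

open Complex
open scoped Real

theorem circleIntegral.integral_sub_inv_of_notMem_closedBall {c w : ℂ} {R : ℝ}
    (hR : 0 ≤ R) (hw : w ∉ closedBall c R) : ∮ z in C(c, R), (z - w)⁻¹ = 0 := by
  refine DiffContOnCl.circleIntegral_eq_zero hR
    (DifferentiableOn.diffContOnCl_ball (U := {w}ᶜ) ?_ fun z hz (hzw : z = w) => hw (hzw ▸ hz))
  exact ((differentiableOn_id.sub_const w).inv fun z hz => sub_ne_zero.mpr hz)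

theorem circleIntegral.integral_sub_inv_of_notMem_sphere {c w : ℂ} {R : ℝ}
    (hR : 0 ≤ R) (hw : w ∉ sphere c R) :
    ∮ z in C(c, R), (z - w)⁻¹ = if dist w c < R then 2 * π * I else 0 := by
  split_ifs with hlt
  · exact integral_sub_inv_of_mem_ball hlt
  · refine integral_sub_inv_of_notMem_closedBall hR fun hle => hw ?_
    exact mem_sphere.mpr (le_antisymm hle (not_lt.mp hlt))

theorem circleIntegral.integral_multiset_sum_sub_inv {c : ℂ} {R : ℝ} (hR : 0 ≤ R)
    (s : Multiset ℂ) (hs : ∀ w ∈ s, w ∉ sphere c R) :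
    ∮ z in C(c, R), (s.map fun w => (z - w)⁻¹).sum =
      2 * π * I * (s.filter fun w => dist w c < R).card := by
  have hcont : ∀ {w}, w ∉ sphere c R → ContinuousOn (fun z => (z - w)⁻¹) (sphere c R) :=
    fun {w} hw => (continuousOn_id.sub continuousOn_const).inv₀ fun z hz =>
      sub_ne_zero.mpr fun (hzw : z = w) => hw (hzw ▸ hz)
  induction s using Multiset.induction_on with
  | empty => simp [circleIntegral]
  | cons w s ih =>
    have hw := hs w (Multiset.mem_cons_self w s)
    have hs' : ∀ v ∈ s, v ∉ sphere c R := fun v hv => hs v (Multiset.mem_cons_of_mem hv)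
    have hsum : CircleIntegrable (fun z => (s.map fun v => (z - v)⁻¹).sum) c R :=
      (continuousOn_multiset_sum s fun v hv => hcont (hs' v hv)).circleIntegrable hR
    simp only [Multiset.map_cons, Multiset.sum_cons]
    rw [integral_add ((hcont hw).circleIntegrable hR) hsum, ih hs',
      integral_sub_inv_of_notMem_sphere hR hw]
    by_cases hlt : dist w c < R
    · rw [if_pos hlt, Multiset.filter_cons_of_pos s hlt, Multiset.card_cons]
      push_cast
      ring
    · rw [if_neg hlt, Multiset.filter_cons_of_neg s hlt, zero_add]

theorem Polynomial.circleIntegral_derivative_div_self (f : ℂ[X]) {c : ℂ} {R : ℝ} (hR : 0 ≤ R)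
    (hf : ∀ z ∈ sphere c R, f.eval z ≠ 0) :
    ∮ z in C(c, R), f.derivative.eval z / f.eval z =
      2 * π * I * (f.roots.filter fun w => dist w c < R).card := by
  have hroots : ∀ w ∈ f.roots, w ∉ sphere c R := fun w hw hws => hf w hws (isRoot_of_mem_roots hw)
  rw [← circleIntegral.integral_multiset_sum_sub_inv hR f.roots hroots]
  refine circleIntegral.integral_congr hR fun z hz => ?_
  simp only [(IsAlgClosed.splits f).eval_derivative_div_eval_of_ne_zero (hf z hz), one_div]

theorem Polynomial.circleIntegrable_derivative_div_self (f : ℂ[X]) {c : ℂ} {R : ℝ} (hR : 0 ≤ R)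
    (hf : ∀ z ∈ sphere c R, f.eval z ≠ 0) :
    CircleIntegrable (fun z => f.derivative.eval z / f.eval z) c R :=
  (f.derivative.continuous.continuousOn.div f.continuous.continuousOn hf).circleIntegrable hR

/-- **Rouché's theorem** for polynomials. -/
theorem Polynomial.card_roots_add_filter_eq_of_norm_lt {f h : ℂ[X]} {c : ℂ} {R : ℝ} (hR : 0 ≤ R)
    (hlt : ∀ z ∈ sphere c R, ‖h.eval z‖ < ‖f.eval z‖) :
    ((f + h).roots.filter fun w => dist w c < R).card =
      (f.roots.filter fun w => dist w c < R).card := by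
  have hf : ∀ z ∈ sphere c R, f.eval z ≠ 0 := fun z hz =>
    norm_pos_iff.mp ((norm_nonneg _).trans_lt (hlt z hz))
  have hfh : ∀ z ∈ sphere c R, (f + h).eval z ≠ 0 := fun z hz h0 => by
    rw [eval_add, add_eq_zero_iff_eq_neg] at h0
    exact (hlt z hz).ne' (by rw [h0, norm_neg])
  have hprim : ∀ z ∈ sphere c R, HasDerivAt (fun z => log (1 + h.eval z / f.eval z))
      ((f + h).derivative.eval z / (f + h).eval z - f.derivative.eval z / f.eval z) z := by
    intro z hz
    have hslit : 1 + h.eval z / f.eval z ∈ slitPlane := by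
      refine mem_slitPlane_of_norm_lt_one ?_
      rw [norm_div, div_lt_one (norm_pos_iff.mpr (hf z hz))]
      exact hlt z hz
    refine (((hasDerivAt_const z 1).add ((h.hasDerivAt z).div (f.hasDerivAt z) (hf z hz))).clog
      hslit).congr_deriv ?_
    have hf0 := hf z hz
    have hfh0 := hfh z hz
    rw [eval_add] at hfh0
    simp only [Pi.add_apply, Pi.div_apply, derivative_add, eval_add]
    field_simp
    ring
  have hdiff : ∮ z in C(c, R), ((f + h).derivative.eval z / (f + h).eval z -
      f.derivative.eval z / f.eval z) = 0 :=
    circleIntegral.integral_eq_zero_of_hasDerivWithinAt hR fun z hz => (hprim z hz).hasDerivWithinAt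
  rw [circleIntegral.integral_sub ((f + h).circleIntegrable_derivative_div_self hR hfh)
    (f.circleIntegrable_derivative_div_self hR hf), sub_eq_zero,
    (f + h).circleIntegral_derivative_div_self hR hfh, f.circleIntegral_derivative_div_self hR hf,
    mul_right_inj' two_pi_I_ne_zero] at hdiff
  exact_mod_cast hdiff

end Rouche

section QuadraticBound

open Real

theorem strictConvexOn_log_quadratic_exp {a b c : ℝ} (ha : 0 < a) (hb : 0 ≤ b) (hc : 0 < c) :
    StrictConvexOn ℝ univ fun t => log (a + b * exp t + c * exp t ^ 2) := by
  have hQ : ∀ x : ℝ, 0 < x → 0 < a + b * x + c * x ^ 2 := fun x hx => by positivity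
  have hderiv : ∀ t, HasDerivAt (fun t => log (a + b * exp t + c * exp t ^ 2))
      ((b * exp t + 2 * c * exp t ^ 2) / (a + b * exp t + c * exp t ^ 2)) t := fun t => by
    refine HasDerivAt.log ?_ (hQ _ (exp_pos t)).ne'
    refine (((hasDerivAt_exp t).const_mul b |>.const_add a).add
      (((hasDerivAt_exp t).pow 2).const_mul c)).congr_deriv ?_
    push_cast
    ring
  refine StrictMono.strictConvexOn_univ_of_deriv
    (continuous_iff_continuousAt.mpr fun t => (hderiv t).continuousAt) ?_
  rw [funext fun t => (hderiv t).deriv]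
  intro s t hst
  have hx := exp_pos s
  have hxy := exp_lt_exp.mpr hst
  set x := exp s
  set y := exp t
  rw [div_lt_div_iff₀ (hQ x hx) (hQ y (hx.trans hxy))]
  -- the cross difference factors as `(y - x) * (a * b + b * c * x * y + 2 * a * c * (x + y))`
  nlinarith [mul_pos (sub_pos.mpr hxy)
    (by positivity : 0 < a * b + b * c * x * y + 2 * a * c * (x + y))]

theorem quadratic_pow_lt_pow_of_mem_Ioo {a b c : ℝ} (ha : 0 < a) (hb : 0 ≤ b) (hc : 0 < c)
    {n q : ℕ} (hq : 0 < q) {x y t : ℝ} (hx : 0 < x) (ht : t ∈ Ioo x y)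
    (hxeq : (a + b * x + c * x ^ 2) ^ q = x ^ n) (hyeq : (a + b * y + c * y ^ 2) ^ q = y ^ n) :
    (a + b * t + c * t ^ 2) ^ q < t ^ n := by
  set F : ℝ → ℝ := fun s => log (a + b * exp s + c * exp s ^ 2) - n / q * s
  have hlin : ConcaveOn ℝ univ fun s : ℝ => (n / q : ℝ) * s :=
    (concaveOn_id convex_univ).smul (by positivity)
  have hFconv : StrictConvexOn ℝ univ F :=
    (strictConvexOn_log_quadratic_exp ha hb hc).sub_concaveOn hlin
  have hqpos : (0 : ℝ) < q := Nat.cast_pos.mpr hq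
  have hF : ∀ z : ℝ, 0 < z →
      F (log z) * q = log ((a + b * z + c * z ^ 2) ^ q) - log (z ^ n) := fun z hz => by
    simp only [F, exp_log hz, log_pow]
    field_simp
  have hFzero : ∀ z : ℝ, 0 < z → (a + b * z + c * z ^ 2) ^ q = z ^ n → F (log z) = 0 :=
    fun z hz hzeq => by simpa [hqpos.ne', hzeq] using hF z hz
  have ht0 : 0 < t := hx.trans ht.1
  have hy : 0 < y := ht0.trans ht.2
  have hFt : F (log t) < 0 := by
    have hseg : log t ∈ openSegment ℝ (log x) (log y) := by
      rw [openSegment_eq_Ioo (log_lt_log hx (ht.1.trans ht.2))]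
      exact ⟨log_lt_log hx ht.1, log_lt_log ht0 ht.2⟩
    simpa [hFzero x hx hxeq, hFzero y hy hyeq] using
      hFconv.lt_on_openSegment (mem_univ _) (mem_univ _)
        (log_lt_log hx (ht.1.trans ht.2)).ne hseg
  have hlog : log ((a + b * t + c * t ^ 2) ^ q) < log (t ^ n) := by
    nlinarith [hF t ht0]
  exact (log_lt_log_iff (by positivity) (by positivity)).mp hlog

theorem norm_quadratic_le {a b c : ℝ} (ha : 0 ≤ a) (hb : 0 ≤ b) (hc : 0 ≤ c) (z : ℂ) :
    ‖(a : ℂ) + b * z + c * z ^ 2‖ ≤ a + b * ‖z‖ + c * ‖z‖ ^ 2 := by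
  calc ‖(a : ℂ) + b * z + c * z ^ 2‖ ≤ ‖(a : ℂ)‖ + ‖(b : ℂ) * z‖ + ‖(c : ℂ) * z ^ 2‖ :=
        norm_add₃_le
    _ = a + b * ‖z‖ + c * ‖z‖ ^ 2 := by
        rw [norm_mul, norm_mul, norm_pow, Complex.norm_of_nonneg ha, Complex.norm_of_nonneg hb,
          Complex.norm_of_nonneg hc]

theorem norm_quadratic_pow_lt_norm_pow {a b c : ℝ} (ha : 0 < a) (hb : 0 ≤ b) (hc : 0 < c)
    {n q : ℕ} (hq : 0 < q) {x y : ℝ} (hx : 0 < x)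
    (hxeq : (a + b * x + c * x ^ 2) ^ q = x ^ n) (hyeq : (a + b * y + c * y ^ 2) ^ q = y ^ n)
    {z : ℂ} (hz : ‖z‖ ∈ Ioo x y) :
    ‖((a : ℂ) + b * z + c * z ^ 2) ^ q‖ < ‖z ^ n‖ := by
  rw [norm_pow, norm_pow]
  calc ‖(a : ℂ) + b * z + c * z ^ 2‖ ^ q ≤ (a + b * ‖z‖ + c * ‖z‖ ^ 2) ^ q :=
        pow_le_pow_left₀ (norm_nonneg _) (norm_quadratic_le ha.le hb hc.le z) q
    _ < ‖z‖ ^ n := quadratic_pow_lt_pow_of_mem_Ioo ha hb hc hq hx hz hxeq hyeq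

end QuadraticBound

theorem stmt_6_general (r m : ℝ) (hm0 : 0 < m) (hm1 : m < 1) (hr1 : 1 < r)
    (a b : ℝ) (ha : a = r * m / 2) (hb : b = r * (1 - m))
    (p q : ℕ) (hpq : p < q)
    (γs γw : ℝ) (hγs : γs ∈ Set.Ioo (0 : ℝ) 1)
    (hsw : γs < γw)
    (heqs : (a + b * γs + a * γs ^ 2) ^ q = γs ^ (q - p))
    (heqw : (a + b * γw + a * γw ^ 2) ^ q = γw ^ (q - p)) :
    Multiset.card
      (((X ^ (q - p) -
          (C (a : ℂ) + C (b : ℂ) * X + C (a : ℂ) * X ^ 2) ^ q).roots).filter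
        (fun z => ‖z‖ ≤ γs)) = q - p := by
  have ha0 : 0 < a := by rw [ha]; nlinarith
  have hb0 : 0 ≤ b := by rw [hb]; nlinarith
  set Q : ℂ[X] := C (a : ℂ) + C (b : ℂ) * X + C (a : ℂ) * X ^ 2
  have hdom : ∀ z : ℂ, ‖z‖ ∈ Ioo γs γw → ‖(-Q ^ q).eval z‖ < ‖(X ^ (q - p) : ℂ[X]).eval z‖ :=
    fun z hz => by
      simpa [Q] using norm_quadratic_pow_lt_norm_pow ha0 hb0 ha0 (p.zero_le.trans_lt hpq)
        hγs.1 heqs heqw hz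
  obtain ⟨ρ, hρ⟩ : ∃ ρ, ρ ∈ Ioo γs γw := exists_between hsw
  have hρ0 : 0 < ρ := hγs.1.trans hρ.1
  have hfilter : (X ^ (q - p) - Q ^ q).roots.filter (fun z => ‖z‖ ≤ γs) =
      (X ^ (q - p) + -Q ^ q).roots.filter (fun z => dist z 0 < ρ) := by
    rw [← sub_eq_add_neg]
    refine Multiset.filter_congr fun z hz => ?_
    rw [dist_zero_right]
    refine ⟨fun h => h.trans_lt hρ.1, fun h => not_lt.mp fun hgt => ?_⟩
    have hroot : (X ^ (q - p) : ℂ[X]).eval z = (Q ^ q).eval z := by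
      simpa [sub_eq_zero] using isRoot_of_mem_roots hz
    exact (hdom z ⟨hgt, h.trans hρ.2⟩).ne (by rw [eval_neg, norm_neg, hroot])
  rw [hfilter, card_roots_add_filter_eq_of_norm_lt hρ0.le fun z hz =>
    hdom z (by rwa [mem_sphere_zero_iff_norm.mp hz]), roots_X_pow, Multiset.nsmul_singleton,
    Multiset.filter_eq_self.mpr fun z hz => by simpa [Multiset.eq_of_mem_replicate hz] using hρ0,
    Multiset.card_replicate]

theorem stmt_6 (r m : ℝ) (hm0 : 0 < m) (hm1 : m < 1) (hr1 : 1 < r) (hr2 : r < 2 / m)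
    (a b : ℝ) (ha : a = r * m / 2) (hb : b = r * (1 - m))
    (p q : ℕ) (hp : 0 < p) (hpq : p < q)
    (γs γw : ℝ) (hγs : γs ∈ Set.Ioo (0 : ℝ) 1) (hγw : γw ∈ Set.Ioo (0 : ℝ) 1)
    (hsw : γs < γw)
    (heqs : (a + b * γs + a * γs ^ 2) ^ q = γs ^ (q - p))
    (heqw : (a + b * γw + a * γw ^ 2) ^ q = γw ^ (q - p)) :
    Multiset.card
      (((X ^ (q - p) -
          (C (a : ℂ) + C (b : ℂ) * X + C (a : ℂ) * X ^ 2) ^ q).roots).filter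
        (fun z => ‖z‖ ≤ γs)) = q - p :=
  stmt_6_general r m hm0 hm1 hr1 a b ha hb p q hpq γs γw hγs hsw heqs heqw
end

section
/- Let γ1 ∈ (0,1) and let γ2 be a real number with -γ1 < γ2 < 0. Let ζ1 > 0 and ζ2 < 0 be the real numbers with ζ1^3 = 1/γ1 and ζ2^3 = 1/γ2. Define k1 = (ζ2 - 1)/(ζ2 - ζ1) and k2 = (1 - ζ1)/(ζ2 - ζ1). Then k1 + k2 = 1, k1 > k2 > 0, and k1*γ1^i + k2*γ2^i > 0 for every integer i ≥ 1. -/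
/-! Odd powers are strictly increasing, so `0 < -γ2 < γ1 < 1` gives `1 < ζ1 < -ζ2`; this fixes the
signs of `k2` and `k1 - k2`. The term `k1 γ1^i` then dominates `k2 γ2^i`, because `k2 < k1` and
`|γ2|^i ≤ γ1^i`. -/

open Set

theorem one_lt_of_pow_eq_one_div {n : ℕ} (hn : Odd n) {γ ζ : ℝ} (hγ : γ ∈ Ioo 0 1)
    (hζ : ζ ^ n = 1 / γ) : 1 < ζ := by
  rw [← hn.strictMono_pow.lt_iff_lt, one_pow, hζ]
  exact one_lt_one_div hγ.1 hγ.2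

theorem lt_neg_of_pow_eq_one_div {n : ℕ} (hn : Odd n) {γ₁ γ₂ ζ₁ ζ₂ : ℝ} (hγ₂l : -γ₁ < γ₂)
    (hγ₂r : γ₂ < 0) (hζ₁ : ζ₁ ^ n = 1 / γ₁) (hζ₂ : ζ₂ ^ n = 1 / γ₂) : ζ₁ < -ζ₂ := by
  rw [← hn.strictMono_pow.lt_iff_lt, hn.neg_pow, hζ₁, hζ₂, ← one_div_neg_eq_neg_one_div]
  exact one_div_lt_one_div_of_lt (neg_pos.mpr hγ₂r) (by linarith)

theorem mul_pow_add_mul_pow_pos {a b c d : ℝ} (hb : 0 ≤ b) (hba : b < a) (hdc : |d| < c)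
    (n : ℕ) : 0 < a * c ^ n + b * d ^ n := by
  have hc : 0 < c ^ n := pow_pos ((abs_nonneg d).trans_lt hdc) n
  have hdn : -(c ^ n) ≤ d ^ n := by
    have : |d ^ n| ≤ c ^ n := by
      rw [abs_pow]
      exact pow_le_pow_left₀ (abs_nonneg d) hdc.le n
    exact (abs_le.mp this).1
  nlinarith [mul_le_mul_of_nonneg_left hdn hb, mul_pos (sub_pos.mpr hba) hc]

theorem stmt_14_general (γ1 γ2 ζ1 ζ2 : ℝ)
    (hγ1 : γ1 ∈ Set.Ioo (0 : ℝ) 1) (hγ2l : -γ1 < γ2) (hγ2r : γ2 < 0)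
    (hζ1 : ζ1 ^ 3 = 1 / γ1)
    (hζ2 : ζ2 ^ 3 = 1 / γ2)
    (k1 k2 : ℝ) (hk1 : k1 = (ζ2 - 1) / (ζ2 - ζ1)) (hk2 : k2 = (1 - ζ1) / (ζ2 - ζ1)) :
    k1 + k2 = 1 ∧ k2 < k1 ∧ 0 < k2 ∧
      ∀ i : ℤ, 1 ≤ i → 0 < k1 * γ1 ^ i + k2 * γ2 ^ i := by
  have hodd : Odd 3 := by decide
  have hζ1_gt : 1 < ζ1 := one_lt_of_pow_eq_one_div hodd hγ1 hζ1
  have hζ12 : ζ1 < -ζ2 := lt_neg_of_pow_eq_one_div hodd hγ2l hγ2r hζ1 hζ2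
  have hd : ζ2 - ζ1 < 0 := by linarith
  have hk2_pos : 0 < k2 := hk2 ▸ div_pos_of_neg_of_neg (by linarith) hd
  have hk21 : k2 < k1 := by
    rw [hk1, hk2, div_lt_div_right_of_neg hd]
    linarith
  refine ⟨by rw [hk1, hk2, ← add_div, sub_add_sub_cancel, div_self hd.ne], hk21, hk2_pos,
    fun i hi => ?_⟩
  lift i to ℕ using by omega
  simpa only [zpow_natCast] using
    mul_pow_add_mul_pow_pos hk2_pos.le hk21 (abs_lt.mpr ⟨hγ2l, by linarith [hγ1.1]⟩) i

theorem stmt_14 (γ1 γ2 ζ1 ζ2 : ℝ)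
    (hγ1 : γ1 ∈ Set.Ioo (0 : ℝ) 1) (hγ2l : -γ1 < γ2) (hγ2r : γ2 < 0)
    (hζ1pos : 0 < ζ1) (hζ1 : ζ1 ^ 3 = 1 / γ1)
    (hζ2neg : ζ2 < 0) (hζ2 : ζ2 ^ 3 = 1 / γ2)
    (k1 k2 : ℝ) (hk1 : k1 = (ζ2 - 1) / (ζ2 - ζ1)) (hk2 : k2 = (1 - ζ1) / (ζ2 - ζ1)) :
    k1 + k2 = 1 ∧ k2 < k1 ∧ 0 < k2 ∧
      ∀ i : ℤ, 1 ≤ i → 0 < k1 * γ1 ^ i + k2 * γ2 ^ i :=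
  stmt_14_general γ1 γ2 ζ1 ζ2 hγ1 hγ2l hγ2r hζ1 hζ2 k1 k2 hk1 hk2
end

section
/- For every γ ∈ (γ_s, γ_w) one has the strict inequality (a + b*γ + a*γ^2)^q < γ^{q-p}. Equivalently, the envelope velocity satisfies s_env(γ) < p/q strictly between the strong and weak decay rates, so that in the exponentially weighted space with weight rate γ the essential spectrum of the linearization about the front lies strictly inside the unit circle. -/
/-!
Write `P γ = a + b γ + a γ²` and `γ = γs ^ w₁ * γw ^ w₂` with positive weights `w₁ + w₂ = 1`.
Hölder's inequality for the three terms of `P` gives `P γ ≤ P γs ^ w₁ * P γw ^ w₂`, strictly because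
the terms `a` and `b γ` scale differently along the way from `γs` to `γw` (strict log-convexity of
`P` in `log γ`). Raising to the `q`-th power and using the two equations at `γs` and `γw` yields
`P γ ^ q < (γs ^ (q - p)) ^ w₁ * (γw ^ (q - p)) ^ w₂ = γ ^ (q - p)`.
-/

open Finset

namespace Real

variable {w₁ w₂ : ℝ}

theorem rpow_mul_rpow_self {c : ℝ} (hc : 0 ≤ c) (hw : w₁ + w₂ = 1) : c ^ w₁ * c ^ w₂ = c := by
  rw [← rpow_add' hc (by simp [hw]), hw, rpow_one]

theorem mul_rpow_mul_mul_rpow {c x y : ℝ} (hc : 0 ≤ c) (hx : 0 ≤ x) (hy : 0 ≤ y)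
    (hw : w₁ + w₂ = 1) : (c * x) ^ w₁ * (c * y) ^ w₂ = c * (x ^ w₁ * y ^ w₂) := by
  rw [mul_rpow hc hx, mul_rpow hc hy, mul_mul_mul_comm, rpow_mul_rpow_self hc hw]

theorem rpow_mul_rpow_pow {x y : ℝ} (hx : 0 ≤ x) (hy : 0 ≤ y) (n : ℕ) :
    (x ^ w₁ * y ^ w₂) ^ n = (x ^ n) ^ w₁ * (y ^ n) ^ w₂ := by
  rw [mul_pow, rpow_pow_comm hx, rpow_pow_comm hy]

theorem sum_rpow_mul_rpow_lt {ι : Type*} {s : Finset ι} {x y : ι → ℝ}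
    (hx : ∀ i ∈ s, 0 ≤ x i) (hy : ∀ i ∈ s, 0 ≤ y i) (hw₁ : 0 < w₁) (hw₂ : 0 < w₂)
    (hw : w₁ + w₂ = 1) (hxy : ∃ i ∈ s, ∃ j ∈ s, x i * y j ≠ x j * y i) :
    ∑ i ∈ s, x i ^ w₁ * y i ^ w₂ < (∑ i ∈ s, x i) ^ w₁ * (∑ i ∈ s, y i) ^ w₂ := by
  set X := ∑ i ∈ s, x i
  set Y := ∑ i ∈ s, y i
  obtain ⟨i, hi, j, hj, hij⟩ := hxy
  have hX : 0 < X := by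
    refine (sum_nonneg hx).lt_of_ne fun h ↦ hij ?_
    rw [(sum_eq_zero_iff_of_nonneg hx).1 h.symm i hi, (sum_eq_zero_iff_of_nonneg hx).1 h.symm j hj]
    ring
  have hY : 0 < Y := by
    refine (sum_nonneg hy).lt_of_ne fun h ↦ hij ?_
    rw [(sum_eq_zero_iff_of_nonneg hy).1 h.symm i hi, (sum_eq_zero_iff_of_nonneg hy).1 h.symm j hj]
    ring
  -- termwise weighted AM-GM for the normalized entries `x k / X` and `y k / Y`
  have hterm (k : ι) (hk : k ∈ s) : x k ^ w₁ * y k ^ w₂ =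
      X ^ w₁ * Y ^ w₂ * ((x k / X) ^ w₁ * (y k / Y) ^ w₂) := by
    rw [div_rpow (hx k hk) hX.le, div_rpow (hy k hk) hY.le]
    field_simp
  have hle (k : ι) (hk : k ∈ s) : x k ^ w₁ * y k ^ w₂ ≤
      X ^ w₁ * Y ^ w₂ * (w₁ * (x k / X) + w₂ * (y k / Y)) := by
    rw [hterm k hk]
    gcongr
    exact geom_mean_le_arith_mean2_weighted hw₁.le hw₂.le (div_nonneg (hx k hk) hX.le)
      (div_nonneg (hy k hk) hY.le) hw
  have hlt : ∃ k ∈ s, x k ^ w₁ * y k ^ w₂ <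
      X ^ w₁ * Y ^ w₂ * (w₁ * (x k / X) + w₂ * (y k / Y)) := by
    by_contra! hall
    have heq (k : ι) (hk : k ∈ s) : x k / X = y k / Y := by
      by_contra hne
      refine (hall k hk).not_gt ?_
      rw [hterm k hk]
      gcongr
      exact (geom_mean_lt_arith_mean2_weighted_iff_of_pos hw₁ hw₂
        (div_nonneg (hx k hk) hX.le) (div_nonneg (hy k hk) hY.le) hw).2 hne
    have hi' := heq i hi
    have hj' := heq j hj
    field_simp at hi' hj'
    have hcross : X * (x i * y j - x j * y i) = 0 := by linear_combination x j * hi' - x i * hj'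
    exact hij (sub_eq_zero.1 ((mul_eq_zero.1 hcross).resolve_left hX.ne'))
  calc ∑ k ∈ s, x k ^ w₁ * y k ^ w₂
      < ∑ k ∈ s, X ^ w₁ * Y ^ w₂ * (w₁ * (x k / X) + w₂ * (y k / Y)) := sum_lt_sum hle hlt
    _ = X ^ w₁ * Y ^ w₂ := by
      rw [← mul_sum, sum_add_distrib, ← mul_sum, ← mul_sum, ← sum_div, ← sum_div,
        div_self hX.ne', div_self hY.ne', mul_one, mul_one, hw, mul_one]

theorem exists_eq_rpow_mul_rpow_of_mem_Ioo {u v x : ℝ} (hu : 0 < u) (hx : x ∈ Set.Ioo u v) :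
    ∃ w₁ w₂ : ℝ, 0 < w₁ ∧ 0 < w₂ ∧ w₁ + w₂ = 1 ∧ x = u ^ w₁ * v ^ w₂ := by
  have hx0 : 0 < x := hu.trans hx.1
  have hlog : log x ∈ openSegment ℝ (log u) (log v) := by
    rw [openSegment_eq_Ioo (log_lt_log hu (hx.1.trans hx.2))]
    exact ⟨log_lt_log hu hx.1, log_lt_log hx0 hx.2⟩
  obtain ⟨w₁, w₂, hw₁, hw₂, hw, hcomb⟩ := hlog
  refine ⟨w₁, w₂, hw₁, hw₂, hw, ?_⟩
  rw [rpow_def_of_pos hu, rpow_def_of_pos (hu.trans (hx.1.trans hx.2)), ← exp_add,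
    mul_comm, mul_comm (log v)]
  simpa [exp_log hx0] using congrArg exp hcomb.symm

end Real

open Real

theorem quadratic_rpow_mul_rpow_lt {a b c u v w₁ w₂ : ℝ} (ha : 0 < a) (hb : 0 < b) (hc : 0 ≤ c)
    (hu : 0 < u) (hv : 0 < v) (huv : u ≠ v) (hw₁ : 0 < w₁) (hw₂ : 0 < w₂) (hw : w₁ + w₂ = 1) :
    a + b * (u ^ w₁ * v ^ w₂) + c * (u ^ w₁ * v ^ w₂) ^ 2 <
      (a + b * u + c * u ^ 2) ^ w₁ * (a + b * v + c * v ^ 2) ^ w₂ := by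
  have hholder := sum_rpow_mul_rpow_lt (s := univ) (x := ![a, b * u, c * u ^ 2])
    (y := ![a, b * v, c * v ^ 2]) (fun i _ ↦ by fin_cases i <;> simp <;> positivity)
    (fun i _ ↦ by fin_cases i <;> simp <;> positivity) hw₁ hw₂ hw
    ⟨0, mem_univ _, 1, mem_univ _, by simpa [mul_comm, ha.ne', hb.ne'] using huv.symm⟩
  simp only [Fin.sum_univ_three, Matrix.cons_val_zero, Matrix.cons_val_one,
    Matrix.cons_val_two, Matrix.head_cons, Matrix.tail_cons] at hholder
  rwa [rpow_mul_rpow_self ha.le hw, mul_rpow_mul_mul_rpow hb.le hu.le hv.le hw,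
    mul_rpow_mul_mul_rpow hc (by positivity) (by positivity) hw, ← rpow_mul_rpow_pow hu.le hv.le]
    at hholder

theorem stmt_16_general (r m : ℝ) (hm0 : 0 < m) (hm1 : m < 1) (hr1 : 1 < r)
    (a b : ℝ) (ha : a = r * m / 2) (hb : b = r * (1 - m))
    (p q : ℕ) (hpq : p < q)
    (γs γw : ℝ) (hγs : γs ∈ Set.Ioo (0 : ℝ) 1)
    (hsw : γs < γw)
    (heqs : (a + b * γs + a * γs ^ 2) ^ q = γs ^ (q - p))
    (heqw : (a + b * γw + a * γw ^ 2) ^ q = γw ^ (q - p)) :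
    ∀ γ ∈ Set.Ioo γs γw, (a + b * γ + a * γ ^ 2) ^ q < γ ^ (q - p) := by
  intro γ hγ
  have ha0 : 0 < a := by rw [ha]; positivity
  have hb0 : 0 < b := by rw [hb]; exact mul_pos (by linarith) (by linarith)
  have hγs0 := hγs.1
  have hγw0 : 0 < γw := hγs0.trans hsw
  obtain ⟨w₁, w₂, hw₁, hw₂, hw, rfl⟩ := exists_eq_rpow_mul_rpow_of_mem_Ioo hγs0 hγ
  calc (a + b * (γs ^ w₁ * γw ^ w₂) + a * (γs ^ w₁ * γw ^ w₂) ^ 2) ^ q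
      < ((a + b * γs + a * γs ^ 2) ^ w₁ * (a + b * γw + a * γw ^ 2) ^ w₂) ^ q := by
        refine pow_lt_pow_left₀ ?_ (by positivity) (by omega)
        exact quadratic_rpow_mul_rpow_lt ha0 hb0 ha0.le hγs0 hγw0 hsw.ne hw₁ hw₂ hw
    _ = (γs ^ w₁ * γw ^ w₂) ^ (q - p) := by
        rw [rpow_mul_rpow_pow (by positivity) (by positivity), heqs, heqw,
          rpow_mul_rpow_pow hγs0.le hγw0.le]

theorem stmt_16 (r m : ℝ) (hm0 : 0 < m) (hm1 : m < 1) (hr1 : 1 < r) (hr2 : r < 2 / m)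
    (a b : ℝ) (ha : a = r * m / 2) (hb : b = r * (1 - m))
    (p q : ℕ) (hp : 0 < p) (hpq : p < q)
    (γs γw : ℝ) (hγs : γs ∈ Set.Ioo (0 : ℝ) 1) (hγw : γw ∈ Set.Ioo (0 : ℝ) 1)
    (hsw : γs < γw)
    (heqs : (a + b * γs + a * γs ^ 2) ^ q = γs ^ (q - p))
    (heqw : (a + b * γw + a * γw ^ 2) ^ q = γw ^ (q - p)) :
    ∀ γ ∈ Set.Ioo γs γw, (a + b * γ + a * γ ^ 2) ^ q < γ ^ (q - p) :=
  stmt_16_general r m hm0 hm1 hr1 a b ha hb p q hpq γs γw hγs hsw heqs heqw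
end

section
/- For every λ ∈ ℂ with |λ| ≥ 1, the complex polynomial λ*X^{q-p} - (a + b*X + a*X^2)^q has exactly q - p roots, counted with multiplicity, in the closed disk {z ∈ ℂ : |z| ≤ γ_s}. -/
/-!
Pick `ρ` with `γs < ρ < γw` and write `P = a + b X + a X²`. Between `γs` and `γw` the envelope
inequality `P(t)^q < t^(q-p)` holds: `g(t) = q log P(t) - (q-p) log t` vanishes at both ends and
`g'` changes sign at most once, from negative to positive. Hence `λ z^(q-p)` strictly dominates
`P(z)^q` on every circle `γs < |z| < γw`: no root lies in that annulus, and on `|z| = ρ` a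
Rouché-type deformation applies. For polynomials of fixed degree the roots move continuously, so
the number of roots in the open disc of radius `ρ` stays constant along a segment of polynomials
with no root on its boundary circle. Such a segment joins `λ X^(q-p) - P^q` to
`λ X^(q-p) - c X^(2q)` with `c > 0` small, whose roots in the disc are the `q - p` roots at `0`.
-/

open Polynomial Filter Topology Set

theorem apply_lt_of_hasDerivAt_of_deriv_sign {g g' : ℝ → ℝ} {x y : ℝ}
    (hderiv : ∀ t ∈ Icc x y, HasDerivAt g (g' t) t) (hxy : g x = g y)
    (hsign : ∀ s u, x < s → s < u → u < y → 0 ≤ g' s → 0 < g' u) {t : ℝ} (ht : t ∈ Ioo x y) :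
    g t < g x := by
  by_contra! h
  have hcont : ContinuousOn g (Icc x y) := fun s hs =>
    (hderiv s hs).continuousAt.continuousWithinAt
  obtain ⟨ξ, hξ, hξ'⟩ := exists_hasDerivAt_eq_slope g g' ht.1
    (hcont.mono (Icc_subset_Icc_right ht.2.le)) fun s hs =>
      hderiv s ⟨hs.1.le, hs.2.le.trans ht.2.le⟩
  obtain ⟨η, hη, hη'⟩ := exists_hasDerivAt_eq_slope g g' ht.2
    (hcont.mono (Icc_subset_Icc_left ht.1.le)) fun s hs =>
      hderiv s ⟨ht.1.le.trans hs.1.le, hs.2.le⟩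
  have hξ0 : 0 ≤ g' ξ := hξ' ▸ div_nonneg (by linarith) (by linarith [ht.1])
  have hη0 : g' η ≤ 0 := hη' ▸ div_nonpos_of_nonpos_of_nonneg (by linarith) (by linarith [ht.2])
  exact (hsign ξ η hξ.1 (hξ.2.trans hη.1) hη.2 hξ0).not_ge hη0

theorem quadratic_pow_lt_pow {a b : ℝ} (ha : 0 < a) (hb : 0 ≤ b) {n q : ℕ} (hnq : n ≤ q)
    (hq : 0 < q) {x y t : ℝ} (hx : 0 < x) (ht : t ∈ Ioo x y)
    (hx' : (a + b * x + a * x ^ 2) ^ q = x ^ n) (hy' : (a + b * y + a * y ^ 2) ^ q = y ^ n) :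
    (a + b * t + a * t ^ 2) ^ q < t ^ n := by
  set P : ℝ → ℝ := fun s => a + b * s + a * s ^ 2
  have hP s (hs : 0 < s) : 0 < P s := by positivity
  -- `W` is increasing, so the derivative `W / (X P)` of `g` changes sign at most once
  set g : ℝ → ℝ := fun s => q * Real.log (P s) - n * Real.log s
  set W : ℝ → ℝ := fun s => q * (s * (b + 2 * a * s)) - n * P s
  have hderiv s (hs : 0 < s) : HasDerivAt g (W s / (s * P s)) s := by
    have hPd : HasDerivAt P (b + 2 * a * s) s :=
      ((((hasDerivAt_id s).const_mul b).const_add a).add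
        ((hasDerivAt_pow 2 s).const_mul a)).congr_deriv (by norm_num; ring)
    refine (((hPd.log (hP s hs).ne').const_mul (q : ℝ)).sub
      ((Real.hasDerivAt_log hs.ne').const_mul (n : ℝ))).congr_deriv ?_
    have hPs := (hP s hs).ne'
    simp only [W]
    field_simp
  have hg s (hs : 0 < s) : g s = Real.log (P s ^ q) - Real.log (s ^ n) := by
    simp only [g, Real.log_pow]
  have hy : 0 < y := hx.trans (ht.1.trans ht.2)
  have hgxy : g x = g y := by rw [hg x hx, hg y hy, hx', hy', sub_self, sub_self]
  have hlt := apply_lt_of_hasDerivAt_of_deriv_sign (g := g)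
    (fun s hs => hderiv s (hx.trans_le hs.1)) hgxy (fun s u hs hsu _ hgs => ?_) ht
  · rw [hg t (hx.trans ht.1), hg x hx, hx', sub_self, sub_neg] at hlt
    exact (Real.log_lt_log_iff (pow_pos (hP t (hx.trans ht.1)) q)
      (pow_pos (hx.trans ht.1) n)).1 hlt
  · have hs0 : 0 < s := hx.trans hs
    have hWs : 0 ≤ W s := by
      simpa using (le_div_iff₀ (mul_pos hs0 (hP s hs0))).1 hgs
    have hWu : W u - W s = (q - n) * (b * (u - s)) + (2 * q - n) * (a * ((u - s) * (u + s))) := by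
      simp only [W, P]; ring
    have hqn : (n : ℝ) ≤ q := by exact_mod_cast hnq
    have hq' : (0 : ℝ) < q := by exact_mod_cast hq
    have hWu_pos : 0 < W u := by
      nlinarith [mul_nonneg (sub_nonneg.2 hqn) (mul_nonneg hb (sub_nonneg.2 hsu.le)),
        mul_pos (by linarith : (0 : ℝ) < 2 * q - n)
          (mul_pos ha (mul_pos (sub_pos.2 hsu) (by linarith : 0 < u + s)))]
    exact div_pos hWu_pos (mul_pos (hs0.trans hsu) (hP u (hs0.trans hsu)))

namespace Polynomial

theorem prod_X_sub_C_eq_multiset_prod {K : Type*} [CommRing K] {n : ℕ} (v : Fin n → K) :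
    ∏ i, (X - C (v i)) = ((Finset.univ.val.map v).map fun a => X - C a).prod := by
  rw [Multiset.map_map]; rfl

theorem exists_eq_C_mul_prod_X_sub_C {K : Type*} [Field K] [IsAlgClosed K] {f : K[X]} {n : ℕ}
    (hf : f.natDegree = n) : ∃ v : Fin n → K, f = C f.leadingCoeff * ∏ i, (X - C (v i)) := by
  have hlen : f.roots.toList.length = n := by
    rw [Multiset.length_toList, IsAlgClosed.card_roots_eq_natDegree, hf]
  refine ⟨fun i => f.roots.toList.get (Fin.cast hlen.symm i), ?_⟩
  rw [prod_X_sub_C_eq_multiset_prod, Fin.univ_val_map, ← List.ofFn_congr hlen, List.ofFn_get,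
    Multiset.coe_toList, C_leadingCoeff_mul_prod_multiset_X_sub_C
      IsAlgClosed.card_roots_eq_natDegree]

theorem roots_C_mul_prod_X_sub_C {K : Type*} [Field K] {n : ℕ} {c : K} (hc : c ≠ 0)
    (v : Fin n → K) : (C c * ∏ i, (X - C (v i))).roots = Finset.univ.val.map v := by
  rw [roots_C_mul _ hc, prod_X_sub_C_eq_multiset_prod, roots_multiset_prod_X_sub_C]

theorem tendsto_eval_of_tendsto_coeff {R ι : Type*} [Semiring R] [TopologicalSpace R]
    [IsTopologicalSemiring R] {l : Filter ι} {Q : ι → R[X]} {Q₀ : R[X]} {D : ℕ}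
    (hcoeff : ∀ k, Tendsto (fun j => (Q j).coeff k) l (𝓝 (Q₀.coeff k)))
    (hdeg : ∀ j, (Q j).natDegree ≤ D) (hdeg₀ : Q₀.natDegree ≤ D) (z : R) :
    Tendsto (fun j => (Q j).eval z) l (𝓝 (Q₀.eval z)) := by
  simp only [fun j => eval_eq_sum_range' (Nat.lt_succ_of_le (hdeg j)) z,
    eval_eq_sum_range' (Nat.lt_succ_of_le hdeg₀) z]
  exact tendsto_finsetSum _ fun k _ => (hcoeff k).mul_const _

theorem tendsto_cauchyBound_of_tendsto_coeff {K ι : Type*} [NormedDivisionRing K]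
    {l : Filter ι} {Q : ι → K[X]} {Q₀ : K[X]} {D : ℕ}
    (hcoeff : ∀ k, Tendsto (fun j => (Q j).coeff k) l (𝓝 (Q₀.coeff k)))
    (hdeg : ∀ j, (Q j).natDegree = D) (hdeg₀ : Q₀.natDegree = D) (hQ₀ : Q₀ ≠ 0) :
    Tendsto (fun j => cauchyBound (Q j)) l (𝓝 (cauchyBound Q₀)) := by
  simp only [cauchyBound, leadingCoeff, hdeg, hdeg₀]
  refine (Tendsto.div ?_ (hcoeff D).nnnorm ?_).add_const 1
  · exact Tendsto.finset_sup_nhds_apply fun k _ => (hcoeff k).nnnorm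
  · simpa [← hdeg₀] using hQ₀

noncomputable def countRootsInBall (f : ℂ[X]) (ρ : ℝ) : ℕ :=
  Multiset.card (f.roots.filter fun z => ‖z‖ < ρ)

theorem countRootsInBall_C_mul_prod {n : ℕ} {c : ℂ} (hc : c ≠ 0) (v : Fin n → ℂ) (ρ : ℝ) :
    (C c * ∏ i, (X - C (v i))).countRootsInBall ρ =
      (Finset.univ.filter fun i => ‖v i‖ < ρ).card := by
  rw [countRootsInBall, roots_C_mul_prod_X_sub_C hc, Multiset.filter_map, Multiset.card_map]
  rfl

theorem eq_C_mul_prod_X_sub_C_of_tendsto {ι : Type*} {l : Filter ι} [l.NeBot] {Q : ι → ℂ[X]}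
    {Q₀ : ℂ[X]} {D : ℕ} {v : ι → Fin D → ℂ} {w : Fin D → ℂ}
    (hcoeff : ∀ k, Tendsto (fun j => (Q j).coeff k) l (𝓝 (Q₀.coeff k)))
    (hdeg : ∀ j, (Q j).natDegree = D) (hdeg₀ : Q₀.natDegree = D)
    (hv : ∀ j, Q j = C (Q j).leadingCoeff * ∏ i, (X - C (v j i))) (hvw : Tendsto v l (𝓝 w)) :
    Q₀ = C Q₀.leadingCoeff * ∏ i, (X - C (w i)) := by
  refine Polynomial.funext fun z => tendsto_nhds_unique
    (tendsto_eval_of_tendsto_coeff hcoeff (fun j => (hdeg j).le) hdeg₀.le z) ?_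
  have hlc : Tendsto (fun j => (Q j).leadingCoeff) l (𝓝 Q₀.leadingCoeff) := by
    simpa only [leadingCoeff, hdeg, hdeg₀] using hcoeff D
  have hlim := hlc.mul (tendsto_finsetProd Finset.univ fun i _ =>
    tendsto_const_nhds (x := z).sub (tendsto_pi_nhds.1 hvw i))
  convert hlim using 2 with j
  · conv_lhs => rw [hv j]
    simp [eval_prod]
  · simp [eval_prod]

theorem exists_subseq_tendsto_countRootsInBall {Q : ℕ → ℂ[X]} {Q₀ : ℂ[X]} {D : ℕ} {ρ : ℝ}
    (hcoeff : ∀ k, Tendsto (fun j => (Q j).coeff k) atTop (𝓝 (Q₀.coeff k)))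
    (hdeg : ∀ j, (Q j).degree = D) (hdeg₀ : Q₀.degree = D)
    (hcirc : ∀ z : ℂ, ‖z‖ = ρ → ¬ Q₀.IsRoot z) :
    ∃ φ : ℕ → ℕ, Tendsto (fun k => (Q (φ k)).countRootsInBall ρ) atTop
      (𝓝 (Q₀.countRootsInBall ρ)) := by
  have hnat j : (Q j).natDegree = D := natDegree_eq_of_degree_eq_some (hdeg j)
  have hnat₀ : Q₀.natDegree = D := natDegree_eq_of_degree_eq_some hdeg₀
  have hne j : Q j ≠ 0 := fun h => by simpa [h] using hdeg j
  have hne₀ : Q₀ ≠ 0 := fun h => by simp [h] at hdeg₀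
  choose v hv using fun j => exists_eq_C_mul_prod_X_sub_C (hnat j)
  obtain ⟨R, hR⟩ := (tendsto_cauchyBound_of_tendsto_coeff hcoeff hnat hnat₀ hne₀).bddAbove_range
  have hbound j : v j ∈ Metric.closedBall 0 R := by
    rw [mem_closedBall_zero_iff, pi_norm_le_iff_of_nonneg R.coe_nonneg]
    intro i
    have hroot : (Q j).IsRoot (v j i) := by
      rw [hv j]
      simp [eval_prod, Finset.prod_eq_zero (Finset.mem_univ i)]
    exact_mod_cast (hroot.norm_lt_cauchyBound (hne j)).le.trans (hR ⟨j, rfl⟩)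
  obtain ⟨w, -, φ, hφ, hvw⟩ := tendsto_subseq_of_bounded Metric.isBounded_closedBall hbound
  have hQ₀ := eq_C_mul_prod_X_sub_C_of_tendsto (fun k => (hcoeff k).comp hφ.tendsto_atTop)
    (fun k => hnat (φ k)) hnat₀ (fun k => hv (φ k)) hvw
  have hw i : ‖w i‖ ≠ ρ := by
    refine fun h => hcirc (w i) h (isRoot_of_mem_roots ?_)
    rw [hQ₀, roots_C_mul_prod_X_sub_C (leadingCoeff_ne_zero.2 hne₀)]
    exact Multiset.mem_map_of_mem _ (Finset.mem_univ i)
  have hev : ∀ᶠ k in atTop, ∀ i, (‖v (φ k) i‖ < ρ ↔ ‖w i‖ < ρ) := by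
    rw [eventually_all]
    intro i
    have hti := (tendsto_pi_nhds.1 hvw i).norm
    rcases (hw i).lt_or_gt with h | h
    · filter_upwards [hti.eventually_lt_const h] with k hk using iff_of_true hk h
    · filter_upwards [hti.eventually_const_lt h] with k hk using iff_of_false hk.not_gt h.not_gt
  refine ⟨φ, ?_⟩
  rw [nhds_discrete, tendsto_pure, hQ₀, countRootsInBall_C_mul_prod (leadingCoeff_ne_zero.2 hne₀)]
  filter_upwards [hev] with k hk
  rw [hv (φ k), countRootsInBall_C_mul_prod (leadingCoeff_ne_zero.2 (hne _))]
  simp only [hk]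

theorem isLocallyConstant_countRootsInBall {T : Type*} [TopologicalSpace T]
    [FirstCountableTopology T] {Q : T → ℂ[X]} {D : ℕ} {ρ : ℝ}
    (hcoeff : ∀ k, Continuous fun t => (Q t).coeff k) (hdeg : ∀ t, (Q t).degree = D)
    (hcirc : ∀ t, ∀ z : ℂ, ‖z‖ = ρ → ¬ (Q t).IsRoot z) :
    IsLocallyConstant fun t => (Q t).countRootsInBall ρ := by
  rw [IsLocallyConstant.iff_continuous, continuous_iff_continuousAt]
  exact fun t => tendsto_of_subseq_tendsto fun u hu =>
    exists_subseq_tendsto_countRootsInBall (fun k => ((hcoeff k).tendsto t).comp hu)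
      (fun j => hdeg _) (hdeg t) (hcirc t)

theorem countRootsInBall_eq_of_segment {A B : ℂ[X]} {D : ℕ} {ρ : ℝ}
    (hA : A.natDegree ≤ D) (hB : B.natDegree ≤ D)
    (hlead : ∀ t ∈ Icc (0 : ℝ) 1, (1 - t) • A.coeff D + t • B.coeff D ≠ 0)
    (hcirc : ∀ t ∈ Icc (0 : ℝ) 1, ∀ z : ℂ, ‖z‖ = ρ → (1 - t) • A.eval z + t • B.eval z ≠ 0) :
    A.countRootsInBall ρ = B.countRootsInBall ρ := by
  let Q : unitInterval → ℂ[X] := fun t => (1 - (t : ℝ)) • A + (t : ℝ) • B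
  have hQ : IsLocallyConstant fun t => (Q t).countRootsInBall ρ := by
    refine isLocallyConstant_countRootsInBall (D := D) (fun k => ?_) (fun t => ?_)
      (fun t z hz => ?_)
    · simp only [Q, coeff_add, coeff_smul]
      fun_prop
    · refine degree_eq_of_le_of_coeff_ne_zero ?_ ?_
      · exact (degree_add_le _ _).trans
          (max_le ((degree_smul_le _ _).trans (degree_le_of_natDegree_le hA))
            ((degree_smul_le _ _).trans (degree_le_of_natDegree_le hB)))
      · simpa [Q] using hlead t t.2
    · simpa [Q] using hcirc t t.2 z hz
  simpa [Q] using hQ.apply_eq_of_preconnectedSpace 0 1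

theorem countRootsInBall_X_pow_mul {h : ℂ[X]} {ρ : ℝ} (hρ : 0 < ρ)
    (hh : ∀ z : ℂ, ‖z‖ < ρ → h.eval z ≠ 0) (n : ℕ) : (X ^ n * h).countRootsInBall ρ = n := by
  have h0 : h ≠ 0 := fun h0 => hh 0 (by simpa using hρ) (by simp [h0])
  rw [countRootsInBall, roots_mul (mul_ne_zero (pow_ne_zero _ X_ne_zero) h0), roots_X_pow,
    Multiset.filter_add, Multiset.card_add, Multiset.filter_eq_self.2, Multiset.filter_eq_nil.2]
  · simp
  · exact fun z hz hlt => hh z hlt ((mem_roots h0).1 hz)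
  · intro z hz
    rw [Multiset.nsmul_singleton] at hz
    rwa [Multiset.eq_of_mem_replicate hz, norm_zero]

theorem countRootsInBall_C_mul_X_pow_sub_C_mul_X_pow {lam d : ℂ} {n D : ℕ} {ρ : ℝ} (hρ : 0 < ρ)
    (hnD : n < D) (hd : ‖d‖ * ρ ^ D < ‖lam‖ * ρ ^ n) :
    (C lam * X ^ n - C d * X ^ D).countRootsInBall ρ = n := by
  obtain ⟨k, rfl⟩ := Nat.exists_eq_add_of_lt hnD
  have hfactor : C lam * X ^ n - C d * X ^ (n + k + 1) = X ^ n * (C lam - C d * X ^ (k + 1)) := by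
    ring
  rw [hfactor]
  refine countRootsInBall_X_pow_mul hρ (fun z hz h0 => ?_) n
  have hlam : lam = d * z ^ (k + 1) := by
    simpa [sub_eq_zero] using h0
  have : ‖lam‖ * ρ ^ n ≤ ‖d‖ * ρ ^ (n + k + 1) :=
    calc ‖lam‖ * ρ ^ n = ‖d‖ * ‖z‖ ^ (k + 1) * ρ ^ n := by rw [hlam, norm_mul, norm_pow]
      _ ≤ ‖d‖ * ρ ^ (k + 1) * ρ ^ n := by gcongr
      _ = ‖d‖ * ρ ^ (n + k + 1) := by ring
  linarith

theorem countRootsInBall_C_mul_X_pow_sub {F : ℂ[X]} {lam : ℂ} {n : ℕ} {ρ : ℝ} (hρ : 0 < ρ)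
    (hn : n < F.natDegree) (hF : ∀ z : ℂ, ‖z‖ = ρ → ‖F.eval z‖ < ‖lam‖ * ρ ^ n) :
    (C lam * X ^ n - F).countRootsInBall ρ = n := by
  set D := F.natDegree
  set c := F.leadingCoeff
  have hc : c ≠ 0 := leadingCoeff_ne_zero.2 (ne_zero_of_natDegree_gt hn)
  have hFD : F.coeff D = c := rfl
  have hM : 0 < ‖lam‖ * ρ ^ n := (norm_nonneg _).trans_lt (hF ρ (by simp [hρ.le]))
  obtain ⟨s, hs, hsM⟩ : ∃ s : ℝ, 0 < s ∧ s * ‖c‖ * ρ ^ D < ‖lam‖ * ρ ^ n := by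
    refine ⟨‖lam‖ * ρ ^ n / (2 * (‖c‖ * ρ ^ D)), by positivity, ?_⟩
    have : ‖lam‖ * ρ ^ n / (2 * (‖c‖ * ρ ^ D)) * ‖c‖ * ρ ^ D = ‖lam‖ * ρ ^ n / 2 := by
      field_simp
    linarith
  have hsc : ‖(s : ℂ) * c‖ = s * ‖c‖ := by
    rw [norm_mul, Complex.norm_real, Real.norm_of_nonneg hs.le]
  -- a positive multiple of `F`'s leading coefficient keeps the degree fixed along the segment
  set G := C lam * X ^ n - C ((s : ℂ) * c) * X ^ D
  rw [countRootsInBall_eq_of_segment (B := G) (D := D)]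
  · exact countRootsInBall_C_mul_X_pow_sub_C_mul_X_pow hρ hn (hsc ▸ hsM)
  · exact natDegree_sub_le_of_le ((natDegree_C_mul_X_pow_le _ _).trans hn.le) le_rfl |>.trans
      (max_self _).le
  · exact natDegree_sub_le_of_le ((natDegree_C_mul_X_pow_le _ _).trans hn.le)
      (natDegree_C_mul_X_pow_le _ _) |>.trans (max_self _).le
  · intro t ht
    have hcoeff : (1 - t) • (C lam * X ^ n - F).coeff D + t • G.coeff D
        = -(((1 - t + t * s : ℝ) : ℂ) * c) := by
      simp only [G, coeff_sub, coeff_C_mul_X_pow, if_neg hn.ne', hFD, Complex.real_smul]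
      push_cast
      ring
    have hpos : 0 < 1 - t + t * s := by
      rcases ht.2.lt_or_eq with h | rfl
      · nlinarith [mul_nonneg ht.1 hs.le]
      · linarith
    rw [hcoeff, neg_ne_zero]
    exact mul_ne_zero (Complex.ofReal_ne_zero.2 hpos.ne') hc
  · intro t ht z hz
    have heval : (1 - t) • (C lam * X ^ n - F).eval z + t • G.eval z
        = lam * z ^ n - ((1 - t) • F.eval z + t • ((s : ℂ) * c * z ^ D)) := by
      simp only [G, eval_sub, eval_mul, eval_C, eval_pow, eval_X, Complex.real_smul]
      push_cast
      ring
    rw [heval, sub_ne_zero]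
    refine ne_of_apply_ne norm (ne_of_gt ?_)
    calc ‖(1 - t) • F.eval z + t • ((s : ℂ) * c * z ^ D)‖
        ≤ (1 - t) * ‖F.eval z‖ + t * (s * ‖c‖ * ρ ^ D) := by
          refine (norm_add_le _ _).trans_eq ?_
          rw [norm_smul, norm_smul, norm_mul, hsc, norm_pow, hz, Real.norm_of_nonneg ht.1,
            Real.norm_of_nonneg (sub_nonneg.2 ht.2)]
      _ ≤ max ‖F.eval z‖ (s * ‖c‖ * ρ ^ D) := by
          nlinarith [mul_le_mul_of_nonneg_left (le_max_left ‖F.eval z‖ (s * ‖c‖ * ρ ^ D))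
            (sub_nonneg.2 ht.2), mul_le_mul_of_nonneg_left
            (le_max_right ‖F.eval z‖ (s * ‖c‖ * ρ ^ D)) ht.1]
      _ < ‖lam‖ * ρ ^ n := max_lt (hF z hz) hsM
      _ = ‖lam * z ^ n‖ := by rw [norm_mul, norm_pow, hz]

end Polynomial

theorem stmt_17_general (r m : ℝ) (hm0 : 0 < m) (hm1 : m < 1) (hr1 : 1 < r)
    (a b : ℝ) (ha : a = r * m / 2) (hb : b = r * (1 - m))
    (p q : ℕ) (hpq : p < q)
    (γs γw : ℝ) (hγs : γs ∈ Set.Ioo (0 : ℝ) 1)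
    (hsw : γs < γw)
    (heqs : (a + b * γs + a * γs ^ 2) ^ q = γs ^ (q - p))
    (heqw : (a + b * γw + a * γw ^ 2) ^ q = γw ^ (q - p))
    (lam : ℂ) (hlam : 1 ≤ ‖lam‖) :
    Multiset.card
      (((C lam * X ^ (q - p) -
          (C (a : ℂ) + C (b : ℂ) * X + C (a : ℂ) * X ^ 2) ^ q).roots).filter
        (fun z => ‖z‖ ≤ γs)) = q - p := by
  have ha0 : 0 < a := by rw [ha]; positivity
  have hb0 : 0 ≤ b := by rw [hb]; exact mul_nonneg (by linarith) (by linarith)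
  set F : ℂ[X] := (C (a : ℂ) + C (b : ℂ) * X + C (a : ℂ) * X ^ 2) ^ q
  have hdom : ∀ z : ℂ, γs < ‖z‖ → ‖z‖ < γw → ‖F.eval z‖ < ‖lam‖ * ‖z‖ ^ (q - p) := by
    intro z hsz hzw
    calc ‖F.eval z‖ ≤ (a + b * ‖z‖ + a * ‖z‖ ^ 2) ^ q := by
          simp only [F, eval_pow, eval_add, eval_mul, eval_C, eval_X, norm_pow]
          gcongr
          refine (norm_add₃_le ..).trans_eq ?_
          simp [Complex.norm_real, abs_of_pos ha0, abs_of_nonneg hb0]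
      _ < ‖z‖ ^ (q - p) :=
          quadratic_pow_lt_pow ha0 hb0 (Nat.sub_le q p) (by omega) hγs.1 ⟨hsz, hzw⟩ heqs heqw
      _ ≤ ‖lam‖ * ‖z‖ ^ (q - p) := le_mul_of_one_le_left (by positivity) hlam
  have hdeg : q - p < F.natDegree := by
    have : (C (a : ℂ) + C (b : ℂ) * X + C (a : ℂ) * X ^ 2).natDegree = 2 := by
      compute_degree!
      exact_mod_cast ha0.ne'
    rw [natDegree_pow, this]
    omega
  obtain ⟨ρ, hsρ, hρw⟩ := exists_between hsw
  have hcount := countRootsInBall_C_mul_X_pow_sub (lam := lam) (hγs.1.trans hsρ) hdeg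
    fun z hz => hz ▸ hdom z (hz ▸ hsρ) (hz ▸ hρw)
  refine Eq.trans (congrArg Multiset.card (Multiset.filter_congr fun z hz => ?_)) hcount
  refine ⟨fun h => h.trans_lt hsρ, fun h => not_lt.1 fun h' => ?_⟩
  have hroot : lam * z ^ (q - p) = F.eval z := by
    simpa [sub_eq_zero] using (mem_roots'.1 hz).2
  exact (hdom z h' (h.trans hρw)).ne (by rw [← hroot, norm_mul, norm_pow])

theorem stmt_17 (r m : ℝ) (hm0 : 0 < m) (hm1 : m < 1) (hr1 : 1 < r) (hr2 : r < 2 / m)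
    (a b : ℝ) (ha : a = r * m / 2) (hb : b = r * (1 - m))
    (p q : ℕ) (hp : 0 < p) (hpq : p < q)
    (γs γw : ℝ) (hγs : γs ∈ Set.Ioo (0 : ℝ) 1) (hγw : γw ∈ Set.Ioo (0 : ℝ) 1)
    (hsw : γs < γw)
    (heqs : (a + b * γs + a * γs ^ 2) ^ q = γs ^ (q - p))
    (heqw : (a + b * γw + a * γw ^ 2) ^ q = γw ^ (q - p))
    (lam : ℂ) (hlam : 1 ≤ ‖lam‖) :
    Multiset.card
      (((C lam * X ^ (q - p) -
          (C (a : ℂ) + C (b : ℂ) * X + C (a : ℂ) * X ^ 2) ^ q).roots).filter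
        (fun z => ‖z‖ ≤ γs)) = q - p :=
  stmt_17_general r m hm0 hm1 hr1 a b ha hb p q hpq γs γw hγs hsw heqs heqw lam hlam
end
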